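/- arXiv:2312.10219 — 6 statements merged into one kernel-verified Lean document; each statement's English description precedes it below -/
import Mathlib

section
/- Let n, d, k be natural numbers with k ≤ n, let v : Fin n → Fin d → ℕ be a family of d-dimensional vectors of natural numbers, let T : Fin d → ℕ, and let Σ j := ∑_{i} v i j denote the componentwise total sum. Assume T j ≤ Σ j for every j. Then there exists a finite set S' ⊆ Fin n with |S'| ≤ k such that T j ≤ ∑_{i ∈ S'} v i j for every j, if and only if there exists a finite set S'' ⊆ Fin n with |S''| ≥ n − k such that ∑_{i ∈ S''} v i j ≤ Σ j − T j for every j (subtraction in ℕ, which here agrees with integer subtraction since T j ≤ Σ j). -/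
/-!
Passing to the complement is a bijection between the two solution sets: `S` has at most `k`
elements iff `Sᶜ` has at least `n - k`, and since `∑_S v + ∑_{Sᶜ} v = Σ`, the bound `T ≤ ∑_S v`
holds iff `∑_{Sᶜ} v ≤ Σ - T`, coordinate by coordinate.
-/

open Finset

section

variable {M : Type*} [AddCommMonoid M] [PartialOrder M] [IsOrderedCancelAddMonoid M] [Sub M]
  [OrderedSub M] [ExistsAddOfLE M]

theorem le_iff_le_tsub_of_add_eq {a b c t : M} (hab : a + b = c) (ht : t ≤ c) :
    t ≤ a ↔ b ≤ c - t := by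
  rw [le_tsub_iff_right ht, ← hab, add_comm a b, add_le_add_iff_left]

theorem Finset.le_sum_iff_sum_compl_le_tsub {ι : Type*} [Fintype ι] [DecidableEq ι]
    (f : ι → M) (S : Finset ι) {t : M} (ht : t ≤ ∑ i, f i) :
    t ≤ ∑ i ∈ S, f i ↔ ∑ i ∈ Sᶜ, f i ≤ ∑ i, f i - t :=
  le_iff_le_tsub_of_add_eq (sum_add_sum_compl S f) ht

end

theorem Finset.card_le_iff_tsub_le_card_compl {ι : Type*} [Fintype ι] [DecidableEq ι]
    (S : Finset ι) (k : ℕ) : #S ≤ k ↔ Fintype.card ι - k ≤ #Sᶜ := by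
  rw [card_compl]
  have := S.card_le_univ
  omega

theorem stmt_0_general (n d k : ℕ) (v : Fin n → Fin d → ℕ) (T : Fin d → ℕ)
    (hT : ∀ j, T j ≤ ∑ i, v i j) :
    (∃ S' : Finset (Fin n), S'.card ≤ k ∧ ∀ j, T j ≤ ∑ i ∈ S', v i j) ↔
      (∃ S'' : Finset (Fin n), n - k ≤ S''.card ∧
        ∀ j, ∑ i ∈ S'', v i j ≤ (∑ i, v i j) - T j) := by
  have compl_solution (S : Finset (Fin n)) :
      (#S ≤ k ∧ ∀ j, T j ≤ ∑ i ∈ S, v i j) ↔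
        (n - k ≤ #Sᶜ ∧ ∀ j, ∑ i ∈ Sᶜ, v i j ≤ (∑ i, v i j) - T j) :=
    and_congr (by simpa using S.card_le_iff_tsub_le_card_compl k)
      (forall_congr' fun j => S.le_sum_iff_sum_compl_le_tsub (v · j) (hT j))
  constructor
  · rintro ⟨S, hS⟩
    exact ⟨Sᶜ, (compl_solution S).1 hS⟩
  · rintro ⟨S, hS⟩
    exact ⟨Sᶜ, (compl_solution Sᶜ).2 (by rwa [compl_compl])⟩

/-- Correctness of the reduction from Multidimensional Relaxed Subset Sum (at most `k`
vectors summing to at least the target `T`) to Multidimensional Uniform 0/1 Knapsack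
(at least `n - k` vectors summing to at most the total sum minus `T`). -/
theorem stmt_0 (n d k : ℕ) (hk : k ≤ n) (v : Fin n → Fin d → ℕ) (T : Fin d → ℕ)
    (hT : ∀ j, T j ≤ ∑ i, v i j) :
    (∃ S' : Finset (Fin n), S'.card ≤ k ∧ ∀ j, T j ≤ ∑ i ∈ S', v i j) ↔
      (∃ S'' : Finset (Fin n), n - k ≤ S''.card ∧
        ∀ j, ∑ i ∈ S'', v i j ≤ (∑ i, v i j) - T j) :=
  stmt_0_general n d k v T hT
end

section
/- Let n, d, k be natural numbers with k ≤ n, let v : Fin n → Fin d → ℕ, and let T : Fin d → ℕ. The following are equivalent: (1) there exists a routing a : Fin n → Fin d → ℕ such that a i j ≤ v i j for all i, j (a i j of the v i j agents from origin i to destination j are routed via the free hub), ∑_{i} a i j ≤ T j for every j (the capacity of the arc from the free hub to destination j is respected), and the number of origins i for which a i j < v i j for some j (origins with at least one agent routed via the costly hub, each contributing cost exactly 1) is at most n − k; (2) there exists a finite set S' ⊆ Fin n with |S'| ≥ k such that ∑_{i ∈ S'} v i j ≤ T j for every j. -/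
/-!
An origin with no agent on the costly hub sends all of its demand through the free hub, so the
origins of zero cost form a set whose total demand fits the capacities; conversely, routing
exactly the origins of a feasible knapsack set through the free hub costs one per origin
outside it.
-/

open Finset

variable {ι κ M : Type*} [Fintype ι] [DecidableEq ι]

theorem sum_compl_filter_exists_lt_le [AddCommMonoid M] [LinearOrder M] [CanonicallyOrderedAdd M]
    (a v : ι → κ → M) [DecidablePred fun i => ∃ j, a i j < v i j] (j : κ) :
    ∑ i ∈ (univ.filter fun i => ∃ j, a i j < v i j)ᶜ, v i j ≤ ∑ i, a i j :=
  calc ∑ i ∈ (univ.filter fun i => ∃ j, a i j < v i j)ᶜ, v i j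
      ≤ ∑ i ∈ (univ.filter fun i => ∃ j, a i j < v i j)ᶜ, a i j := by
        refine sum_le_sum fun i hi => ?_
        simp only [mem_compl, mem_filter, mem_univ, true_and, not_exists, not_lt] at hi
        exact hi j
    _ ≤ ∑ i, a i j := sum_le_sum_of_subset (subset_univ _)

theorem filter_exists_ite_mem_lt_subset_compl [Preorder M] [Zero M]
    (S : Finset ι) (v : ι → κ → M)
    [DecidablePred fun i => ∃ j, (if i ∈ S then v i j else 0) < v i j] :
    (univ.filter fun i => ∃ j, (if i ∈ S then v i j else 0) < v i j) ⊆ Sᶜ := by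
  intro i hi
  obtain ⟨j, hj⟩ := (mem_filter.mp hi).2
  refine mem_compl.mpr fun hiS => ?_
  rw [if_pos hiS] at hj
  exact lt_irrefl _ hj

/-- The combinatorial core of the reduction from Multidimensional Uniform 0/1 Knapsack to
System Optimum Atomic Congestion on `K_{2,n+d}`: there is a routing `a` (numbers of agents
sent through the capacitated free hub) respecting `a i j ≤ v i j` and the capacities `T j`,
with at most `n - k` origins having some agent routed through the costly hub, iff there is a
set `S'` of at least `k` origins with `∑_{i ∈ S'} v i j ≤ T j` for every `j`. -/
theorem stmt_2 (n d k : ℕ) (hk : k ≤ n) (v : Fin n → Fin d → ℕ) (T : Fin d → ℕ) :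
    (∃ a : Fin n → Fin d → ℕ,
      (∀ i j, a i j ≤ v i j) ∧
      (∀ j, ∑ i, a i j ≤ T j) ∧
      (Finset.univ.filter (fun i : Fin n => ∃ j, a i j < v i j)).card ≤ n - k) ↔
    (∃ S' : Finset (Fin n), k ≤ S'.card ∧ ∀ j, ∑ i ∈ S', v i j ≤ T j) := by
  constructor
  · rintro ⟨a, -, hcap, hcost⟩
    refine ⟨(univ.filter fun i => ∃ j, a i j < v i j)ᶜ, ?_,
      fun j => (sum_compl_filter_exists_lt_le a v j).trans (hcap j)⟩
    rw [card_compl, Fintype.card_fin]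
    omega
  · rintro ⟨S, hkS, hS⟩
    refine ⟨fun i j => if i ∈ S then v i j else 0, fun i j => ?_, fun j => ?_, ?_⟩
    · dsimp only
      split_ifs <;> simp
    · rw [sum_ite_mem, univ_inter]
      exact hS j
    · calc _ ≤ #Sᶜ := card_le_card (filter_exists_ite_mem_lt_subset_compl S v)
        _ = n - #S := by rw [card_compl, Fintype.card_fin]
        _ ≤ n - k := Nat.sub_le_sub_left hkS n
end

section
/- Let n, m be natural numbers and let C : Fin m → Finset (Fin n) be a family of clauses over n variables such that every clause C j has exactly 3 elements and every variable i lies in exactly 3 clauses, i.e. |{j : i ∈ C j}| = 3. Define g : ℕ → ℕ by g 0 = 0, g 1 = 1, g 2 = 2, g 3 = 0, and for a routing b : Fin n → Fin m → Bool let t i := |{j : i ∈ C j ∧ b i j = true}|. Then the following are equivalent: (1) there exists an assignment π : Fin n → Bool such that every clause contains exactly one true variable, i.e. |{i ∈ C j : π i = true}| = 1 for every j; (2) there exists b : Fin n → Fin m → Bool such that for every clause j, |{i ∈ C j : b i j = true}| ≤ 1 and |{i ∈ C j : b i j = false}| ≤ 2, and moreover ∑_{i} ( g (t i) + g (3 −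 t i) ) = 0. -/
/-!
A 1-in-3 assignment `π` gives the routing `b i j = π i`: each variable sends all three agents
the same way, so its arcs carry loads `0` and `3`, which cost nothing, and each clause receives
one agent on its true side and two on its false side.

Conversely, the cost of a variable is `g t + g (3 - t)`, and one of `t`, `3 - t` is `1` unless
`t ∈ {0, 3}`; so a routing of cost `0` sends all agents of every variable the same way and
`π i := (t i = 3)` agrees with `b i j` on every occurrence. A clause with three variables, at
most one routed true and at most two routed false, then has exactly one true variable.
-/

namespace Finset

variable {α : Type*} {s : Finset α}

theorem card_filter_eq_true_eq_one_iff (f : α → Bool) (hs : s.card = 3) :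
    (s.filter (f · = true)).card = 1 ↔
      (s.filter (f · = true)).card ≤ 1 ∧ (s.filter (f · = false)).card ≤ 2 := by
  have := card_filter_add_card_filter_not (s := s) (f · = true)
  simp only [Bool.not_eq_true] at this
  omega

theorem apply_eq_decide_of_card_filter_eq_zero_or_card {f : α → Bool} {k : ℕ} (hs : s.card = k)
    (h : (s.filter (f · = true)).card = 0 ∨ (s.filter (f · = true)).card = k)
    {x : α} (hx : x ∈ s) : f x = decide ((s.filter (f · = true)).card = k) := by
  subst hs
  rcases h with h | h
  · have hne : (s.filter (f · = true)).card ≠ s.card := by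
      rw [h]; exact (card_pos.mpr ⟨x, hx⟩).ne
    simpa [hne] using card_filter_eq_zero_iff.mp h x hx
  · simpa [h] using card_filter_eq_iff.mp h x hx

end Finset

theorem eq_zero_or_eq_three_of_add_sub_eq_zero {g : ℕ → ℕ} (hg1 : g 1 ≠ 0) {t : ℕ}
    (ht : t ≤ 3) (h : g t + g (3 - t) = 0) : t = 0 ∨ t = 3 := by
  by_contra! hne
  obtain rfl | rfl : t = 1 ∨ t = 2 := by omega
  · exact hg1 (Nat.eq_zero_of_add_eq_zero_right h)
  · exact hg1 (Nat.eq_zero_of_add_eq_zero_left h)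

theorem stmt_4_general (n m : ℕ) (C : Fin m → Finset (Fin n))
    (hC : ∀ j, (C j).card = 3)
    (hvar : ∀ i : Fin n, (Finset.univ.filter (fun j : Fin m => i ∈ C j)).card = 3)
    (g : ℕ → ℕ) (hg0 : g 0 = 0) (hg1 : g 1 = 1) (hg3 : g 3 = 0) :
    (∃ π : Fin n → Bool, ∀ j, ((C j).filter (fun i => π i = true)).card = 1) ↔
    (∃ b : Fin n → Fin m → Bool,
      (∀ j, ((C j).filter (fun i => b i j = true)).card ≤ 1) ∧
      (∀ j, ((C j).filter (fun i => b i j = false)).card ≤ 2) ∧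
      ∑ i : Fin n,
        (g ((Finset.univ.filter (fun j : Fin m => i ∈ C j ∧ b i j = true)).card) +
          g (3 - (Finset.univ.filter (fun j : Fin m => i ∈ C j ∧ b i j = true)).card)) = 0) := by
  constructor
  · rintro ⟨π, hπ⟩
    have hclause := fun j => ((C j).card_filter_eq_true_eq_one_iff π (hC j)).mp (hπ j)
    refine ⟨fun i _ => π i, fun j => (hclause j).1, fun j => (hclause j).2,
      Finset.sum_eq_zero fun i _ => ?_⟩
    cases hπi : π i
    · simp [hπi, hg0, hg3]
    · simp [hπi, hvar i, hg0, hg3]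
  · rintro ⟨b, hT, hF, hcost⟩
    simp only [← Finset.filter_filter] at hcost
    set t : Fin n → ℕ := fun i =>
      ((Finset.univ.filter (fun j : Fin m => i ∈ C j)).filter (b i · = true)).card
    have hconst : ∀ i j, i ∈ C j → b i j = decide (t i = 3) := by
      intro i j hij
      have ht : t i = 0 ∨ t i = 3 :=
        eq_zero_or_eq_three_of_add_sub_eq_zero (by rw [hg1]; exact one_ne_zero)
          ((Finset.card_filter_le _ _).trans (hvar i).le)
          (Finset.sum_eq_zero_iff.mp hcost i (Finset.mem_univ i))
      exact Finset.apply_eq_decide_of_card_filter_eq_zero_or_card (hvar i) ht (by simpa using hij)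
    refine ⟨fun i => decide (t i = 3), fun j => ?_⟩
    have hagree : (C j).filter (fun i => decide (t i = 3) = true) = (C j).filter (b · j = true) :=
      Finset.filter_congr fun i hi => by rw [hconst i j hi]
    rw [hagree, (C j).card_filter_eq_true_eq_one_iff _ (hC j)]
    exact ⟨hT j, hF j⟩

/-- The combinatorial core of the reduction from monotone cubic exact 1-in-3 SAT to System
Optimum Atomic Congestion on DAGs: a cubic monotone formula (every clause has exactly 3
variables, every variable is in exactly 3 clauses) has an exact 1-in-3 satisfying
assignment iff there is a routing `b` of the three agents of each variable respecting the
clause-side capacities (at most 1 through the true side, at most 2 through the false side)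
of total cost `∑ i (g (t i) + g (3 - t i)) = 0`, where `t i` is the number of agents of
variable `i` routed through its true copy and `g` is the cost `x · ℓ(x)` of the variable
arcs (`g 0 = 0`, `g 1 = 1`, `g 2 = 2`, `g 3 = 0`). -/
theorem stmt_4 (n m : ℕ) (C : Fin m → Finset (Fin n))
    (hC : ∀ j, (C j).card = 3)
    (hvar : ∀ i : Fin n, (Finset.univ.filter (fun j : Fin m => i ∈ C j)).card = 3)
    (g : ℕ → ℕ) (hg0 : g 0 = 0) (hg1 : g 1 = 1) (hg2 : g 2 = 2) (hg3 : g 3 = 0) :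
    (∃ π : Fin n → Bool, ∀ j, ((C j).filter (fun i => π i = true)).card = 1) ↔
    (∃ b : Fin n → Fin m → Bool,
      (∀ j, ((C j).filter (fun i => b i j = true)).card ≤ 1) ∧
      (∀ j, ((C j).filter (fun i => b i j = false)).card ≤ 2) ∧
      ∑ i : Fin n,
        (g ((Finset.univ.filter (fun j : Fin m => i ∈ C j ∧ b i j = true)).card) +
          g (3 - (Finset.univ.filter (fun j : Fin m => i ∈ C j ∧ b i j = true)).card)) = 0) :=
  stmt_4_general n m C hC hvar g hg0 hg1 hg3
end

section
/- Consider the directed graph D on the six vertices {u, u', b, c, v', v} whose arcs are exactly (u,u'), (u',u), (v,v'), (v',v), (u',b), (v',b), (b,c), (c,u'), (c,v'). Then: (i) every directed walk from u to v in D (a nonempty list of vertices starting at u, ending at v, with every consecutive pair an arc of D) contains the arc (b,c) as a consecutive pair; (ii) every directed walk from v to u in D contains the arc (b,c) as a consecutive pair; consequently (iii) there do not exist a directed walk from u to v and a directed walk from v to u in D that are arc-disjoint, i.e. that share no common consecutive ordered pair of vertices. -/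
/-- The six vertices of the arc gadget replacing an undirected edge `uv` in the reduction
from Edge-Disjoint Paths to System Optimum Atomic Congestion with unit capacities. -/
inductive GadgetVert : Type
  | u | u' | b | c | v' | v
  deriving DecidableEq

open GadgetVert

/-- The arcs of the gadget digraph `D`. -/
def GadgetArc : GadgetVert → GadgetVert → Prop := fun x y =>
  (x = u ∧ y = u') ∨ (x = u' ∧ y = u) ∨ (x = v ∧ y = v') ∨ (x = v' ∧ y = v) ∨
  (x = u' ∧ y = b) ∨ (x = v' ∧ y = b) ∨ (x = b ∧ y = c) ∨
  (x = c ∧ y = u') ∨ (x = c ∧ y = v')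

/-!
The only arc of `D` leaving `{u, u', b}` is `(b, c)`, and likewise for `{v, v', b}`. A walk
starting inside one of these sets and ending outside it must therefore traverse `(b, c)`.
-/

namespace List

variable {α : Type*} {r : α → α → Prop} {a b : α}

theorem IsChain.and_not_of_not_infix :
    ∀ {l : List α}, l.IsChain r → ¬[a, b] <:+: l → l.IsChain fun x y => r x y ∧ ¬(x = a ∧ y = b)
  | [], _, _ => .nil
  | [x], _, _ => .singleton x
  | x :: y :: l, h, hab => by
    rw [isChain_cons_cons] at h ⊢
    refine ⟨⟨h.1, ?_⟩, h.2.and_not_of_not_infix fun hi => hab (hi.trans (suffix_cons x _).isInfix)⟩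
    rintro ⟨rfl, rfl⟩
    exact hab (prefix_append [x, y] l).isInfix

theorem IsChain.infix_of_head_of_getLast {p : α → Prop} {l : List α} {x z : α}
    (hl : l.IsChain r) (hclosed : ∀ x y, r x y → p x → p y ∨ (x = a ∧ y = b))
    (hx : l.head? = some x) (hz : l.getLast? = some z) (px : p x) (pz : ¬p z) :
    [a, b] <:+: l := by
  by_contra hab
  refine pz ((hl.and_not_of_not_infix hab).induction p l ?_ ?_ z (mem_of_getLast? hz))
  · rintro x y ⟨hxy, hne⟩ px
    exact (hclosed x y hxy px).resolve_right hne
  · exact fun hne => (head_eq_iff_head?_eq_some hne).mpr hx ▸ px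

end List

theorem GadgetArc.uSide_or_bc {x y : GadgetVert} (hxy : GadgetArc x y) :
    (x = u ∨ x = u' ∨ x = b) → (y = u ∨ y = u' ∨ y = b) ∨ (x = b ∧ y = c) := by
  cases x <;> cases y <;> simp_all [GadgetArc]

theorem GadgetArc.vSide_or_bc {x y : GadgetVert} (hxy : GadgetArc x y) :
    (x = v ∨ x = v' ∨ x = b) → (y = v ∨ y = v' ∨ y = b) ∨ (x = b ∧ y = c) := by
  cases x <;> cases y <;> simp_all [GadgetArc]

theorem GadgetArc.infix_of_walk_u_v {w : List GadgetVert} (hu : w.head? = some u)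
    (hv : w.getLast? = some v) (hw : w.IsChain GadgetArc) : [b, c] <:+: w :=
  hw.infix_of_head_of_getLast (fun _ _ => GadgetArc.uSide_or_bc) hu hv (by simp) (by simp)

theorem GadgetArc.infix_of_walk_v_u {w : List GadgetVert} (hv : w.head? = some v)
    (hu : w.getLast? = some u) (hw : w.IsChain GadgetArc) : [b, c] <:+: w :=
  hw.infix_of_head_of_getLast (fun _ _ => GadgetArc.vSide_or_bc) hv hu (by simp) (by simp)

/-- (i) Every directed walk from `u` to `v` in the gadget `D` uses the arc `(b, c)`;
(ii) every directed walk from `v` to `u` in `D` uses the arc `(b, c)`; consequently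
(iii) there is no pair of arc-disjoint directed walks from `u` to `v` and from `v` to `u`. -/
theorem stmt_5 :
    (∀ w : List GadgetVert, w ≠ [] → w.head? = some u → w.getLast? = some v →
      List.Chain' GadgetArc w → [b, c] <:+: w) ∧
    (∀ w : List GadgetVert, w ≠ [] → w.head? = some v → w.getLast? = some u →
      List.Chain' GadgetArc w → [b, c] <:+: w) ∧
    ¬ ∃ w₁ w₂ : List GadgetVert,
      (w₁ ≠ [] ∧ w₁.head? = some u ∧ w₁.getLast? = some v ∧ List.Chain' GadgetArc w₁) ∧
      (w₂ ≠ [] ∧ w₂.head? = some v ∧ w₂.getLast? = some u ∧ List.Chain' GadgetArc w₂) ∧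
      (∀ x y : GadgetVert, ¬([x, y] <:+: w₁ ∧ [x, y] <:+: w₂)) := by
  refine ⟨fun _ _ => GadgetArc.infix_of_walk_u_v, fun _ _ => GadgetArc.infix_of_walk_v_u, ?_⟩
  rintro ⟨w₁, w₂, ⟨-, hu₁, hv₁, hw₁⟩, ⟨-, hv₂, hu₂, hw₂⟩, hdisjoint⟩
  exact hdisjoint b c
    ⟨GadgetArc.infix_of_walk_u_v hu₁ hv₁ hw₁, GadgetArc.infix_of_walk_v_u hv₂ hu₂ hw₂⟩
end

section
/- Let V be a finite type, G a finite simple graph on V, and P a finite indexed family of terminal pairs (s_p, t_p) ∈ V × V. Construct the directed graph D whose vertex set is V together with, for each edge e of G, two internal vertices b_e, c_e and one port vertex p_{w,e} for each endpoint w of e; the arcs of D are, for every edge e of G and every endpoint w of e: (w, p_{w,e}), (p_{w,e}, w), (p_{w,e}, b_e), (b_e, c_e), and (c_e, p_{w,e}). Then there exists a family of walks in G, one connecting s_p to t_p for each terminal pair p, that are pairwise edge-disjoint (no two walks traverse a common edge of G), if and only if there exists a family of directed walks in D, one from s_p to t_p for each terminal pair p, that are pairwise arc-disjoint and in which each arc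 of D is used at most once in total. -/
/-- The vertices of the digraph `D` obtained from a simple graph `G` by replacing each
edge `e` by the capacity-1 arc gadget: the original vertices, a port vertex `port e w` for
each endpoint `w` of `e`, and the two internal vertices `bv e` and `cv e`. -/
inductive DVert (V : Type) : Type
  | orig : V → DVert V
  | port : Sym2 V → V → DVert V
  | bv : Sym2 V → DVert V
  | cv : Sym2 V → DVert V

/-- The arcs of the digraph `D`: for every edge `e` of `G` and every endpoint `w` of `e`,
the arcs `(w, port e w)`, `(port e w, w)`, `(port e w, bv e)`, `(bv e, cv e)`, and
`(cv e, port e w)`. -/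
inductive DArc {V : Type} (G : SimpleGraph V) : DVert V → DVert V → Prop
  | toPort (e : Sym2 V) (he : e ∈ G.edgeSet) (w : V) (hw : w ∈ e) :
      DArc G (.orig w) (.port e w)
  | fromPort (e : Sym2 V) (he : e ∈ G.edgeSet) (w : V) (hw : w ∈ e) :
      DArc G (.port e w) (.orig w)
  | toB (e : Sym2 V) (he : e ∈ G.edgeSet) (w : V) (hw : w ∈ e) :
      DArc G (.port e w) (.bv e)
  | bc (e : Sym2 V) (he : e ∈ G.edgeSet) :
      DArc G (.bv e) (.cv e)
  | fromC (e : Sym2 V) (he : e ∈ G.edgeSet) (w : V) (hw : w ∈ e) :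
      DArc G (.cv e) (.port e w)

namespace GadgetAux

open SimpleGraph

variable {V : Type}

def label : DVert V → Option (Sym2 V)
  | .orig _ => none
  | .port e _ => some e
  | .bv e => some e
  | .cv e => some e

def arcLabel (x y : DVert V) : Option (Sym2 V) :=
  match label x with
  | some e => some e
  | none => label y

def zipArcs {α : Type*} (L : List α) : List (α × α) := L.zip L.tail

lemma zipArcs_cons_cons {α : Type*} (x y : α) (L : List α) :
    zipArcs (x :: y :: L) = (x, y) :: zipArcs (y :: L) := rfl

lemma mem_zipArcs_cons {α : Type*} {x : α} {L : List α} {p : α × α}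
    (h : p ∈ zipArcs L) : p ∈ zipArcs (x :: L) := by
  cases L with
  | nil => simp [zipArcs] at h
  | cons y L => rw [zipArcs_cons_cons]; exact List.mem_cons_of_mem _ h

variable {G : SimpleGraph V}

def toD : ∀ {a b : V}, G.Walk a b → List (DVert V)
  | a, _, .nil => [.orig a]
  | _, _, @Walk.cons _ _ u v _ h W =>
      .orig u :: .port s(u, v) u :: .bv s(u, v) :: .cv s(u, v) :: .port s(u, v) v :: toD W

lemma toD_ne_nil {a b : V} (W : G.Walk a b) : toD W ≠ [] := by
  cases W <;> simp [toD]

lemma toD_head {a b : V} (W : G.Walk a b) : (toD W).head? = some (.orig a) := by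
  cases W <;> simp [toD]

lemma getLast?_cons {α : Type*} {L : List α} {y : α} (x : α) (h : L.getLast? = some y) :
    (x :: L).getLast? = some y := by
  cases L with
  | nil => simp at h
  | cons z L => rw [List.getLast?_cons_cons]; exact h

lemma toD_getLast {a b : V} (W : G.Walk a b) : (toD W).getLast? = some (.orig b) := by
  induction W with
  | nil => simp [toD]
  | cons h W ih =>
      exact getLast?_cons _ (getLast?_cons _ (getLast?_cons _ (getLast?_cons _
        (getLast?_cons _ ih))))

lemma toD_chain' {a b : V} (W : G.Walk a b) : List.Chain' (DArc G) (toD W) := by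
  induction W with
  | nil => simp [toD, List.Chain']
  | @cons u v w h W ih =>
      have he : s(u, v) ∈ G.edgeSet := G.mem_edgeSet.mpr h
      rw [toD, List.Chain', List.isChain_cons_cons, List.isChain_cons_cons, List.isChain_cons_cons, List.isChain_cons_cons]
      refine ⟨.toPort _ he _ (Sym2.mem_mk_left u v), .toB _ he _ (Sym2.mem_mk_left u v),
        .bc _ he, .fromC _ he _ (Sym2.mem_mk_right u v), ?_⟩
      rw [List.isChain_cons]
      refine ⟨fun y hy => ?_, ih⟩
      rw [toD_head W] at hy
      cases hy
      exact .fromPort _ he _ (Sym2.mem_mk_right u v)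

lemma zipArcs_toD_cons {u v w : V} (h : G.Adj u v) (W : G.Walk v w) :
    zipArcs (toD (Walk.cons h W)) =
      [((.orig u : DVert V), (.port s(u, v) u : DVert V)),
       (.port s(u, v) u, .bv s(u, v)), (.bv s(u, v), .cv s(u, v)),
       (.cv s(u, v), .port s(u, v) v), (.port s(u, v) v, .orig v)] ++ zipArcs (toD W) := by
  cases W <;> simp [toD, zipArcs]

lemma mem_zipArcs_toD {a b : V} {W : G.Walk a b} {xy : DVert V × DVert V}
    (h : xy ∈ zipArcs (toD W)) : ∃ e ∈ W.edges, arcLabel xy.1 xy.2 = some e := by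
  induction W with
  | nil => simp [toD, zipArcs] at h
  | @cons u v w hadj W ih =>
      rw [zipArcs_toD_cons, List.mem_append] at h
      rcases h with h | h
      · refine ⟨s(u, v), by simp, ?_⟩
        simp only [List.mem_cons, List.mem_singleton] at h
        rcases h with rfl | rfl | rfl | rfl | rfl | h <;> first
          | exact absurd h List.not_mem_nil
          | simp [arcLabel, label]
      · obtain ⟨e, he, hl⟩ := ih h
        exact ⟨e, by simp [he], hl⟩

lemma nodup_zipArcs_toD {a b : V} {W : G.Walk a b} (hW : W.edges.Nodup) :
    (zipArcs (toD W)).Nodup := by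
  induction W with
  | nil => simp [toD, zipArcs]
  | @cons u v w hadj W ih =>
      rw [SimpleGraph.Walk.edges_cons, List.nodup_cons] at hW
      rw [zipArcs_toD_cons, List.nodup_append]
      refine ⟨?_, ih hW.2, ?_⟩
      · have hne : u ≠ v := hadj.ne
        simp [hne, hne.symm]
      · intro xy hxy xy₂ hxy' hEq
        subst hEq
        obtain ⟨e, he, hl⟩ := mem_zipArcs_toD hxy'
        have : arcLabel xy.1 xy.2 = some s(u, v) := by
          simp only [List.mem_cons, List.mem_singleton] at hxy
          rcases hxy with rfl | rfl | rfl | rfl | rfl | hxy <;> first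
            | exact absurd hxy List.not_mem_nil
            | simp [arcLabel, label]
        rw [this] at hl
        exact hW.1 (Option.some.inj hl ▸ he)

lemma extract (G : SimpleGraph V) :
    ∀ (n : ℕ) (L : List (DVert V)), L.length ≤ n → L.Chain' (DArc G) →
    ∀ b : V, L.getLast? = some (.orig b) →
      (∀ a : V, L.head? = some (.orig a) →
        ∃ W : G.Walk a b, ∀ f ∈ W.edges, ((.bv f : DVert V), (.cv f : DVert V)) ∈ zipArcs L) ∧
      (∀ (e : Sym2 V) (a : V), L.head? = some (.port e a) →
        ∃ W : G.Walk a b, ∀ f ∈ W.edges, ((.bv f : DVert V), (.cv f : DVert V)) ∈ zipArcs L) := by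
  intro n
  induction n with
  | zero =>
      intro L hL _ b hlast
      rw [Nat.le_zero, List.length_eq_zero_iff] at hL
      subst hL
      simp at hlast
  | succ n ih =>
      intro L hL hchain b hlast
      constructor
      · -- head is an original vertex
        intro a hhead
        cases L with
        | nil => simp at hhead
        | cons x L' =>
        simp only [List.head?_cons, Option.some.injEq] at hhead
        subst hhead
        cases L' with
        | nil =>
            simp only [List.getLast?_singleton, Option.some.injEq, DVert.orig.injEq] at hlast
            subst hlast
            exact ⟨Walk.nil, by simp⟩
        | cons x L'' =>
            have harc : DArc G (.orig a) x := (List.isChain_cons_cons.mp hchain).1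
            cases harc with
            | toPort e he a hw =>
                have hlast' : (DVert.port e a :: L'').getLast? = some (.orig b) := by
                  rwa [List.getLast?_cons_cons] at hlast
                obtain ⟨W, hW⟩ := (ih (.port e a :: L'')
                  (by simpa using Nat.le_of_succ_le_succ hL)
                  hchain.tail b hlast').2 e a rfl
                exact ⟨W, fun f hf => mem_zipArcs_cons (hW f hf)⟩
      · -- head is a port vertex
        intro e a hhead
        cases L with
        | nil => simp at hhead
        | cons x L' =>
        simp only [List.head?_cons, Option.some.injEq] at hhead
        subst hhead
        cases L' with
        | nil => simp [List.getLast?_singleton] at hlast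
        | cons x L'' =>
            have harc : DArc G (.port e a) x := (List.isChain_cons_cons.mp hchain).1
            have hlast1 : (x :: L'').getLast? = some (.orig b) := by
              rwa [List.getLast?_cons_cons] at hlast
            cases harc with
            | fromPort e he a hw =>
                obtain ⟨W, hW⟩ := (ih (.orig a :: L'')
                  (by simpa using Nat.le_of_succ_le_succ hL)
                  hchain.tail b hlast1).1 a rfl
                exact ⟨W, fun f hf => mem_zipArcs_cons (hW f hf)⟩
            | toB e he a hwa =>
                cases L'' with
                | nil => simp [List.getLast?_singleton] at hlast1
                | cons y L3 =>
                    have harc2 : DArc G (.bv e) y := (List.isChain_cons_cons.mp hchain.tail).1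
                    have hlast2 : (y :: L3).getLast? = some (.orig b) := by
                      rwa [List.getLast?_cons_cons] at hlast1
                    cases harc2 with
                    | bc e he2 =>
                        cases L3 with
                        | nil => simp [List.getLast?_singleton] at hlast2
                        | cons z L4 =>
                            have harc3 : DArc G (.cv e) z :=
                              (List.isChain_cons_cons.mp hchain.tail.tail).1
                            have hlast3 : (z :: L4).getLast? = some (.orig b) := by
                              rwa [List.getLast?_cons_cons] at hlast2
                            cases harc3 with
                            | fromC e he3 w hw =>
                                have hlen : (DVert.port e w :: L4).length ≤ n := by
                                  have := Nat.le_of_succ_le_succ hL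
                                  simp only [List.length_cons] at this ⊢
                                  omega
                                obtain ⟨W, hW⟩ := (ih (.port e w :: L4) hlen
                                  hchain.tail.tail.tail b hlast3).2 e w rfl
                                have hmem : ∀ f ∈ W.edges,
                                    ((.bv f : DVert V), (.cv f : DVert V)) ∈
                                      zipArcs (DVert.port e a :: .bv e :: .cv e ::
                                        .port e w :: L4) := by
                                  intro f hf
                                  exact mem_zipArcs_cons (mem_zipArcs_cons
                                    (mem_zipArcs_cons (hW f hf)))
                                by_cases haw : a = w
                                · subst haw
                                  exact ⟨W, hmem⟩
                                · have hee : e = s(a, w) :=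
                                    (Sym2.mem_and_mem_iff haw).mp ⟨hwa, hw⟩
                                  have hadj : G.Adj a w := G.mem_edgeSet.mp (hee ▸ he3)
                                  refine ⟨Walk.cons hadj W, ?_⟩
                                  intro f hf
                                  rw [SimpleGraph.Walk.edges_cons, List.mem_cons] at hf
                                  rcases hf with rfl | hf
                                  · rw [← hee]
                                    rw [zipArcs_cons_cons, zipArcs_cons_cons]
                                    simp
                                  · exact hmem f hf

end GadgetAux

open GadgetAux in
/-- Correctness of the gadget replacement: there is a family of pairwise edge-disjoint
walks in `G` connecting the terminal pairs iff there is a family of directed walks in `D`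
connecting the corresponding terminal pairs that are pairwise arc-disjoint and in which
each arc of `D` is used at most once in total. -/
theorem stmt_6 {V : Type} [Fintype V] (G : SimpleGraph V)
    {ι : Type} [Fintype ι] (s t : ι → V) :
    (∃ W : (p : ι) → G.Walk (s p) (t p),
      ∀ p q : ι, p ≠ q → ∀ e : Sym2 V, e ∈ (W p).edges → e ∉ (W q).edges) ↔
    (∃ F : ι → List (DVert V),
      (∀ p, F p ≠ [] ∧ (F p).head? = some (.orig (s p)) ∧
        (F p).getLast? = some (.orig (t p)) ∧ List.Chain' (DArc G) (F p)) ∧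
      (∀ p, ((F p).zip (F p).tail).Nodup) ∧
      (∀ p q, p ≠ q → ∀ x ∈ (F p).zip (F p).tail, x ∉ (F q).zip (F q).tail)) := by
  classical
  constructor
  · rintro ⟨W, hdisj⟩
    refine ⟨fun p => toD (W p).bypass, fun p => ⟨toD_ne_nil _, toD_head _, toD_getLast _,
      toD_chain' _⟩, fun p => ?_, fun p q hpq x hx hx' => ?_⟩
    · exact nodup_zipArcs_toD (W p).bypass_isPath.isTrail.edges_nodup
    · obtain ⟨e, he, hle⟩ := mem_zipArcs_toD (W := (W p).bypass) hx
      obtain ⟨f, hf, hlf⟩ := mem_zipArcs_toD (W := (W q).bypass) hx'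
      rw [hle] at hlf
      obtain rfl : e = f := Option.some.inj hlf
      exact hdisj p q hpq e ((W p).edges_bypass_subset he)
        ((W q).edges_bypass_subset hf)
  · rintro ⟨F, h1, _, h3⟩
    have key : ∀ p, ∃ W : G.Walk (s p) (t p),
        ∀ f ∈ W.edges, ((.bv f : DVert V), (.cv f : DVert V)) ∈ zipArcs (F p) := by
      intro p
      obtain ⟨-, hhead, hlast, hchain⟩ := h1 p
      exact (extract G (F p).length (F p) le_rfl hchain (t p) hlast).1 (s p) hhead
    choose W hW using key
    refine ⟨W, fun p q hpq e hep heq => ?_⟩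
    exact h3 p q hpq _ (hW p e hep) (hW q e heq)
end

section
/- Let G be a finite connected simple graph, let T be a spanning tree of G rooted at a vertex r, and for a vertex v call a vertex x a descendant of v if the unique path in T from x to r passes through v. Define the local feedback edge set E_loc(v) as the set of edges of G not in T whose endpoints' unique connecting path in T passes through v. Call a child w of v (a T-neighbor of v whose parent is v) complex if v and w lie in the same connected component of the graph G with the single edge vw deleted, and simple otherwise. Then for every complex child w of v there is an edge of E_loc(v) with an endpoint that is a descendant of w, and the number of complex children of v is at most 2·|E_loc(v)|. -/
open SimpleGraph

private lemma stmt8_cross {V : Type} {H : SimpleGraph V} (P : V → Prop) :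
    ∀ {x y : V} (p : H.Walk x y), P x → ¬ P y →
      ∃ d ∈ p.darts, P d.fst ∧ ¬ P d.snd := by
  intro x y p
  induction p with
  | nil => intro hx hy; exact absurd hx hy
  | @cons x m y h q ih =>
    intro hx hy
    by_cases hm : P m
    · obtain ⟨d, hd, h1, h2⟩ := ih hm hy
      exact ⟨d, by rw [SimpleGraph.Walk.darts_cons]; exact List.mem_cons_of_mem _ hd, h1, h2⟩
    · exact ⟨⟨(x, m), h⟩, by rw [SimpleGraph.Walk.darts_cons]; exact List.mem_cons_self,
        hx, hm⟩

private lemma stmt8_ncard_prod {α : Type} (s : Set α) :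
    (s ×ˢ (Set.univ : Set Bool)).ncard = s.ncard * 2 := by
  rw [← Nat.card_coe_set_eq, Nat.card_congr (Equiv.Set.prod s Set.univ), Nat.card_prod,
    Nat.card_coe_set_eq, Nat.card_coe_set_eq, Set.ncard_univ]
  simp [Nat.card_eq_fintype_card]

/-- For a spanning tree `T` of a connected graph `G` rooted at `r`, and a child `w` of a
vertex `v` (a `T`-neighbor of `v` that is a descendant of `v`), if `w` is complex (i.e.,
`v` and `w` are still connected in `G` after deleting the edge `vw`), then some edge of the
local feedback edge set `E_loc(v)` has an endpoint that is a descendant of `w`; moreover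
the number of complex children of `v` is at most `2 · |E_loc(v)|`. -/
theorem stmt_8 {V : Type} [Fintype V] (G T : SimpleGraph V)
    (hG : G.Connected) (hTG : T ≤ G) (hT : T.IsTree) (r : V)
    (Desc : V → V → Prop)
    (hDesc : ∀ v x : V, Desc v x ↔ ∀ p : T.Walk x r, p.IsPath → v ∈ p.support)
    (Eloc : V → Set (Sym2 V))
    (hEloc : ∀ v : V, Eloc v =
      {e | e ∈ G.edgeSet ∧ e ∉ T.edgeSet ∧
        ∀ a b : V, e = s(a, b) → ∀ p : T.Walk a b, p.IsPath → v ∈ p.support}) :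
    ∀ v : V,
      (∀ w : V, T.Adj v w → Desc v w →
        (G.deleteEdges {s(v, w)}).Reachable v w →
        ∃ e ∈ Eloc v, ∃ a : V, a ∈ e ∧ Desc w a) ∧
      {w : V | T.Adj v w ∧ Desc v w ∧ (G.deleteEdges {s(v, w)}).Reachable v w}.ncard
        ≤ 2 * (Eloc v).ncard := by
  classical
  have hconn : T.Connected := hT.isConnected
  have huniq : ∀ {x y : V} (p q : T.Walk x y), p.IsPath → q.IsPath → p = q := by
    intro x y p q hp hq
    exact ((hT.existsUnique_path x y).unique hp hq)
  have hPex : ∀ x : V, ∃ p : T.Walk x r, p.IsPath := by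
    intro x
    obtain ⟨q⟩ := hconn.preconnected x r
    exact ⟨q.toPath.val, q.toPath.property⟩
  choose P hP using hPex
  have hDm : ∀ u x : V, Desc u x ↔ u ∈ (P x).support := by
    intro u x
    rw [hDesc]
    constructor
    · intro h; exact h (P x) (hP x)
    · intro h p hp; rwa [huniq p (P x) hp (hP x)]
  have hPr : P r = Walk.nil := huniq _ _ (hP r) Walk.IsPath.nil
  -- single-edge characterization of takeUntil for adjacent vertices
  have huntil : ∀ (x y : V) (hxy : T.Adj x y) (p : T.Walk x r) (hp : p.IsPath)
      (hy : y ∈ p.support), p.takeUntil y hy = Walk.cons hxy Walk.nil := by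
    intro x y hxy p hp hy
    refine huniq _ _ (hp.takeUntil hy) ?_
    exact Walk.IsPath.nil.cons (by simp [hxy.ne])
  intro v
  -- w is not on the path from v to the root
  have hnotPv : ∀ w : V, T.Adj v w → Desc v w → w ∉ (P v).support := by
    intro w hvw hDvw h
    have hvPw : v ∈ (P w).support := (hDm v w).1 hDvw
    have hdrop : (P v).dropUntil w h = P w := huniq _ _ ((hP v).dropUntil h) (hP w)
    have hnodup := (hP v).support_nodup
    have hspec := (P v).take_spec h
    rw [← hspec, Walk.support_append] at hnodup
    have hdisj := List.disjoint_of_nodup_append hnodup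
    have hv1 : v ∈ ((P v).takeUntil w h).support := Walk.start_mem_support _
    have hv2 : v ∈ ((P v).dropUntil w h).support.tail := by
      have hvd : v ∈ ((P v).dropUntil w h).support := by rw [hdrop]; exact hvPw
      rw [Walk.support_eq_cons] at hvd
      rcases List.mem_cons.1 hvd with h' | h'
      · exact absurd h' hvw.ne
      · exact h'
    exact hdisj hv1 hv2
  -- parent decomposition
  have hpar : ∀ w : V, (hvw : T.Adj v w) → Desc v w →
      P w = Walk.cons hvw.symm (P v) := by
    intro w hvw hDvw
    exact huniq _ _ (hP w) ((hP v).cons (hnotPv w hvw hDvw))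
  have hwr : ∀ w : V, T.Adj v w → Desc v w → w ∉ (P r).support := by
    intro w hvw hDvw h
    rw [hPr] at h
    simp only [Walk.support_nil, List.mem_singleton] at h
    subst h
    have h2 := hPr.symm.trans (hpar w hvw hDvw)
    have h3 := congrArg Walk.length h2
    simp [Walk.length_cons, Walk.length_nil] at h3
  -- the cut lemma: any tree edge crossing the descendant cut of w is (w, v)
  have cut : ∀ w : V, T.Adj v w → Desc v w → ∀ a b : V, T.Adj a b →
      w ∈ (P a).support → w ∉ (P b).support → a = w ∧ b = v := by
    intro w hvw hDvw a b hab hwa hwb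
    have hbPa : b ∈ (P a).support := by
      by_contra hb
      have hcons : (Walk.cons hab.symm (P a)).IsPath := (hP a).cons hb
      have hPb : P b = Walk.cons hab.symm (P a) := huniq _ _ (hP b) hcons
      apply hwb
      rw [hPb, Walk.support_cons]
      exact List.mem_cons_of_mem _ hwa
    have hdropb : (P a).dropUntil b hbPa = P b := huniq _ _ ((hP a).dropUntil _) (hP b)
    have hw_take : w ∈ ((P a).takeUntil b hbPa).support := by
      have hwa' := hwa
      rw [← (P a).take_spec hbPa, Walk.support_append, List.mem_append] at hwa'
      rcases hwa' with h | h
      · exact h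
      · exact absurd (by rw [← hdropb]; exact List.mem_of_mem_tail h) hwb
    rw [huntil a b hab (P a) (hP a) hbPa] at hw_take
    simp only [Walk.support_cons, Walk.support_nil, List.mem_cons, List.mem_singleton] at hw_take
    have haw : a = w := by
      rcases hw_take with h | h
      · exact h.symm
      · rcases h with h | h
        · exact absurd (h ▸ Walk.start_mem_support (P b)) hwb
        · simp at h
    subst haw
    refine ⟨rfl, ?_⟩
    -- now show b = v
    have h1 : (P a).takeUntil b hbPa = Walk.cons hab Walk.nil :=
      huntil a b hab (P a) (hP a) hbPa
    have h2 : P a = Walk.cons hab ((P a).dropUntil b hbPa) := by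
      conv_lhs => rw [← (P a).take_spec hbPa]
      rw [h1, Walk.cons_append, Walk.nil_append]
    have h3 := hpar a hvw hDvw
    have h4 : (Walk.cons hab ((P a).dropUntil b hbPa)).getVert 1 =
        (Walk.cons hvw.symm (P v)).getVert 1 := by rw [← h2, ← h3]
    simpa [Walk.getVert_cons_succ, Walk.getVert_zero] using h4
  -- Part 1
  have part1 : ∀ w : V, T.Adj v w → Desc v w → (G.deleteEdges {s(v, w)}).Reachable v w →
      ∃ e ∈ Eloc v, ∃ a : V, a ∈ e ∧ Desc w a := by
    intro w hvw hDvw hreach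
    obtain ⟨q⟩ := hreach.symm
    obtain ⟨d, hd, hdw, hdnw⟩ := stmt8_cross (fun x => w ∈ (P x).support) q
      (Walk.start_mem_support _) (hnotPv w hvw hDvw)
    have hadj := d.adj
    rw [SimpleGraph.deleteEdges_adj] at hadj
    obtain ⟨hGadj, hne⟩ := hadj
    refine ⟨s(d.fst, d.snd), ?_, d.fst, Sym2.mem_mk_left _ _, (hDm w d.fst).2 hdw⟩
    rw [hEloc]
    refine ⟨hGadj, ?_, ?_⟩
    · intro hTe
      have hTadj : T.Adj d.fst d.snd := hTe
      obtain ⟨h1, h2⟩ := cut w hvw hDvw _ _ hTadj hdw hdnw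
      apply hne
      rw [h1, h2]
      simp [Sym2.eq_swap]
    · intro a b heab p hp
      rcases Sym2.eq_iff.1 heab with ⟨ha, hb⟩ | ⟨ha, hb⟩
      · -- a = d.fst, b = d.snd
        obtain ⟨d', hd', h1', h2'⟩ := stmt8_cross (fun x => w ∈ (P x).support) p
          (ha ▸ hdw) (hb ▸ hdnw)
        obtain ⟨e1, e2⟩ := cut w hvw hDvw _ _ d'.adj h1' h2'
        rw [← e2]
        exact Walk.dart_snd_mem_support_of_mem_darts p hd'
      · -- a = d.snd, b = d.fst
        obtain ⟨d', hd', h1', h2'⟩ := stmt8_cross (fun x => w ∉ (P x).support) p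
          (hb ▸ hdnw) (fun h => h (ha ▸ hdw))
        rw [not_not] at h2'
        obtain ⟨e1, e2⟩ := cut w hvw hDvw _ _ d'.adj.symm h2' h1'
        rw [← e2]
        exact Walk.dart_fst_mem_support_of_mem_darts p hd'
  -- uniqueness: distinct children have disjoint descendant sets
  have uniq : ∀ w w' : V, T.Adj v w → Desc v w → T.Adj v w' → Desc v w' →
      ∀ a : V, Desc w a → Desc w' a → w = w' := by
    intro w w' hvw hDvw hvw' hDvw' a hwa hw'a
    obtain ⟨d, hd, h1, h2⟩ := stmt8_cross (fun x => w ∈ (P x).support) (P a)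
      ((hDm w a).1 hwa) (hwr w hvw hDvw)
    obtain ⟨e1, e2⟩ := cut w hvw hDvw _ _ d.adj h1 h2
    obtain ⟨d', hd', h1', h2'⟩ := stmt8_cross (fun x => w' ∈ (P x).support) (P a)
      ((hDm w' a).1 hw'a) (hwr w' hvw' hDvw')
    obtain ⟨e1', e2'⟩ := cut w' hvw' hDvw' _ _ d'.adj h1' h2'
    have hnodup : ((P a).darts.map (·.snd)).Nodup := by
      rw [Walk.map_snd_darts]
      exact (hP a).support_nodup.tail
    have hdd : d = d' := List.inj_on_of_nodup_map hnodup hd hd' (by rw [e2, e2'])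
    rw [← e1, ← e1', hdd]
  refine ⟨part1, ?_⟩
  set S := {w : V | T.Adj v w ∧ Desc v w ∧ (G.deleteEdges {s(v, w)}).Reachable v w} with hS
  have hsel : ∀ w ∈ S, ∃ p : Sym2 V × V, p.1 ∈ Eloc v ∧ p.2 ∈ p.1 ∧ Desc w p.2 := by
    intro w hw
    obtain ⟨e, he, a, ha, hda⟩ := part1 w hw.1 hw.2.1 hw.2.2
    exact ⟨(e, a), he, ha, hda⟩
  have hfex : ∃ f : V → Sym2 V × V,
      ∀ w ∈ S, (f w).1 ∈ Eloc v ∧ (f w).2 ∈ (f w).1 ∧ Desc w (f w).2 := by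
    refine ⟨fun w => if h : w ∈ S then (hsel w h).choose else (s(r, r), r), ?_⟩
    intro w hw
    simp only [dif_pos hw]
    exact (hsel w hw).choose_spec
  obtain ⟨f, hf⟩ := hfex
  let g : V → Sym2 V × Bool := fun w => ((f w).1, decide ((f w).2 = (f w).1.out.1))
  have hmaps : ∀ w ∈ S, g w ∈ (Eloc v) ×ˢ (Set.univ : Set Bool) := by
    intro w hw
    exact ⟨(hf w hw).1, Set.mem_univ _⟩
  have hinj : Set.InjOn g S := by
    intro w hw w' hw' heq
    obtain ⟨hfe1, hfm1, hfd1⟩ := hf w hw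
    obtain ⟨hfe2, hfm2, hfd2⟩ := hf w' hw'
    have heq' := heq
    simp only [g, Prod.mk.injEq] at heq'
    obtain ⟨he, hb⟩ := heq'
    have hout : ∀ (e : Sym2 V) (x : V), x ∈ e → x = e.out.1 ∨ x = e.out.2 := by
      intro e x hx
      have : e = s(e.out.1, e.out.2) := by
        exact (e.out_eq).symm
      rw [this] at hx
      exact Sym2.mem_iff.1 hx
    have hb' : ((f w).2 = (f w).1.out.1) ↔ ((f w').2 = (f w').1.out.1) :=
      decide_eq_decide.1 hb
    have ha : (f w).2 = (f w').2 := by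
      by_cases hc : (f w).2 = (f w).1.out.1
      · rw [hc, he]
        exact (hb'.1 hc).symm
      · have hc' : ¬ (f w').2 = (f w').1.out.1 := fun h => hc (hb'.2 h)
        have h1 := (hout _ _ hfm1).resolve_left hc
        have h2 := (hout _ _ hfm2).resolve_left hc'
        rw [h1, h2, he]
    exact uniq w w' hw.1 hw.2.1 hw'.1 hw'.2.1 (f w).2 hfd1 (ha ▸ hfd2)
  calc S.ncard ≤ ((Eloc v) ×ˢ (Set.univ : Set Bool)).ncard :=
        Set.ncard_le_ncard_of_injOn g hmaps hinj (Set.toFinite _)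
    _ = (Eloc v).ncard * 2 := stmt8_ncard_prod _
    _ = 2 * (Eloc v).ncard := Nat.mul_comm _ _
end
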